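/- Uniform coercivity of the regularized entropy (Lemma A.1): for every β > 0 there exists a constant C_β ≥ 0, depending only on β, such that for all λ ∈ [0,1) and all c ∈ ℝ, ((1 − λ)/2)·(c − 1/2)² + H_λ(c) + H_λ(1 − c) ≥ β·|c − 1/2| − C_β. -/

import Mathlib

/-! Since `H_λ ≥ 0` and the right-hand side is symmetric under `c ↦ 1 - c`, it suffices to bound
`β (1/2 - c)` by the quadratic term plus `H_λ(c)` alone, with `C_β = β/2 + β² e^β / 2`.
If `1 - λ ≥ e^{-β}`, the quadratic term does it by AM-GM. If `1 - λ < e^{-β}`, the left branch of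
`H_λ` has slope `log((1 - λ)/(1 + λ)) ≤ -β`, so for `c ≤ 0` it grows at least like `β |c|`, while
for `c ≥ 0` we have `β (1/2 - c) ≤ β/2`. -/

noncomputable def Hlam (lam c : ℝ) : ℝ :=
  if c ≤ (1 - lam) / 2 then c * Real.log ((1 - lam) / (1 + lam)) + lam
  else if c ≤ (1 + lam) / 2 then c * Real.log (2 * c / (1 + lam)) - c + (1 + lam) / 2
  else 0

open Real InformationTheory

lemma mul_le_half_mul_sq_add {a : ℝ} (ha : 0 < a) (b t : ℝ) :
    b * t ≤ a / 2 * t ^ 2 + b ^ 2 / (2 * a) := by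
  have key : 0 ≤ (a * t - b) ^ 2 / (2 * a) := by positivity
  have expand : (a * t - b) ^ 2 / (2 * a) = a / 2 * t ^ 2 + b ^ 2 / (2 * a) - b * t := by
    field_simp
    ring
  linarith

section Hlam

variable {lam c : ℝ}

lemma Hlam_of_le (hc : c ≤ (1 - lam) / 2) :
    Hlam lam c = c * log ((1 - lam) / (1 + lam)) + lam := by
  rw [Hlam, if_pos hc]

/-- On the middle branch `H_λ` is the relative entropy of `c` with respect to `(1 + λ)/2`. -/
lemma Hlam_of_lt_of_le (hc₁ : (1 - lam) / 2 < c) (hc₂ : c ≤ (1 + lam) / 2) :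
    Hlam lam c = (1 + lam) / 2 * klFun (2 * c / (1 + lam)) := by
  have : 1 + lam ≠ 0 := by linarith
  rw [Hlam, if_neg hc₁.not_ge, if_pos hc₂, klFun]
  field_simp
  ring

lemma Hlam_of_gt (h₀ : 0 ≤ lam) (hc : (1 + lam) / 2 < c) : Hlam lam c = 0 := by
  rw [Hlam, if_neg (by linarith), if_neg hc.not_ge]

lemma log_one_sub_div_one_add_nonpos (h₀ : 0 ≤ lam) (h₁ : lam ≤ 1) :
    log ((1 - lam) / (1 + lam)) ≤ 0 :=
  log_nonpos (div_nonneg (by linarith) (by linarith))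
    ((div_le_one (by linarith)).2 (by linarith))

/-- The left branch is nonincreasing and meets the middle branch at `(1 - λ)/2`. -/
lemma Hlam_nonneg (h₀ : 0 ≤ lam) (h₁ : lam ≤ 1) (c : ℝ) : 0 ≤ Hlam lam c := by
  have hpos : 0 < 1 + lam := by linarith
  rcases le_or_gt c ((1 - lam) / 2) with hc | hc
  · have at_kink : (1 - lam) / 2 * log ((1 - lam) / (1 + lam)) + lam
        = (1 + lam) / 2 * klFun ((1 - lam) / (1 + lam)) := by
      have : 1 + lam ≠ 0 := by linarith
      rw [klFun]
      field_simp
      ring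
    have hkink : 0 ≤ (1 - lam) / 2 * log ((1 - lam) / (1 + lam)) + lam :=
      at_kink ▸ mul_nonneg (by positivity) (klFun_nonneg (div_nonneg (by linarith) hpos.le))
    rw [Hlam_of_le hc]
    linarith [mul_le_mul_of_nonpos_right hc (log_one_sub_div_one_add_nonpos h₀ h₁)]
  rcases le_or_gt c ((1 + lam) / 2) with hc' | hc'
  · rw [Hlam_of_lt_of_le hc hc']
    have : 0 ≤ c := by linarith
    exact mul_nonneg (by positivity) (klFun_nonneg (by positivity))
  · rw [Hlam_of_gt h₀ hc']

lemma mul_log_le_Hlam_of_nonpos (h₀ : 0 ≤ lam) (h₁ : lam ≤ 1) (hc : c ≤ 0) :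
    c * log ((1 - lam) / (1 + lam)) ≤ Hlam lam c := by
  rw [Hlam_of_le (by linarith)]
  linarith

lemma log_one_sub_div_one_add_le_neg {β : ℝ} (h₀ : 0 ≤ lam) (h₁ : lam < 1)
    (hexp : 1 - lam ≤ exp (-β)) :
    log ((1 - lam) / (1 + lam)) ≤ -β :=
  calc log ((1 - lam) / (1 + lam))
      ≤ log (1 - lam) := log_le_log (div_pos (by linarith) (by linarith))
        (div_le_self (by linarith) (by linarith))
    _ ≤ -β := (log_le_iff_le_exp (by linarith)).2 hexp

end Hlam

lemma mul_half_sub_le_quad_add_Hlam {β lam : ℝ} (hβ : 0 ≤ β) (h₀ : 0 ≤ lam) (h₁ : lam < 1)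
    (c : ℝ) :
    β * (1 / 2 - c) - (β / 2 + β ^ 2 * exp β / 2)
      ≤ (1 - lam) / 2 * (c - 1 / 2) ^ 2 + Hlam lam c := by
  have hquad : 0 ≤ (1 - lam) / 2 * (c - 1 / 2) ^ 2 := by
    have : 0 ≤ 1 - lam := by linarith
    positivity
  have hH := Hlam_nonneg h₀ h₁.le c
  have hC : 0 ≤ β ^ 2 * exp β / 2 := by positivity
  rcases le_or_gt (exp (-β)) (1 - lam) with hlam | hlam
  · have amgm := mul_le_half_mul_sq_add (exp_pos (-β)) β (1 / 2 - c)
    have hconst : β ^ 2 / (2 * exp (-β)) = β ^ 2 * exp β / 2 := by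
      rw [exp_neg]
      field_simp
    have hmono : exp (-β) / 2 * (1 / 2 - c) ^ 2 ≤ (1 - lam) / 2 * (c - 1 / 2) ^ 2 := by
      rw [show (1 / 2 - c) ^ 2 = (c - 1 / 2) ^ 2 by ring]
      gcongr
    linarith
  rcases le_or_gt c 0 with hc₀ | hc₀
  · have hslope := mul_le_mul_of_nonpos_left (log_one_sub_div_one_add_le_neg h₀ h₁ hlam.le) hc₀
    have := mul_log_le_Hlam_of_nonpos h₀ h₁.le hc₀
    linarith
  · have := mul_nonneg hβ hc₀.le
    linarith

/-- Uniform coercivity of the regularized entropy (Lemma A.1). -/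
theorem regularized_entropy_coercivity (β : ℝ) (hβ : 0 < β) :
    ∃ Cβ : ℝ, 0 ≤ Cβ ∧ ∀ lam ∈ Set.Ico (0:ℝ) 1, ∀ c : ℝ,
      β * |c - 1/2| - Cβ
        ≤ (1 - lam) / 2 * (c - 1/2) ^ 2 + Hlam lam c + Hlam lam (1 - c) := by
  refine ⟨β / 2 + β ^ 2 * exp β / 2, by positivity, ?_⟩
  rintro lam ⟨h₀, h₁⟩ c
  have left := mul_half_sub_le_quad_add_Hlam hβ.le h₀ h₁ c
  have right := mul_half_sub_le_quad_add_Hlam hβ.le h₀ h₁ (1 - c)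
  rw [show (1 - c - 1 / 2) ^ 2 = (c - 1 / 2) ^ 2 by ring] at right
  have := Hlam_nonneg h₀ h₁.le c
  have := Hlam_nonneg h₀ h₁.le (1 - c)
  rcases abs_cases (c - 1 / 2) with ⟨habs, -⟩ | ⟨habs, -⟩ <;> rw [habs] <;> linarith
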